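/- Let K be a field of characteristic zero and let P = x + p(x,y) and Q = y + q(x,y) be polynomials in K[x,y], where p and q contain only monomials of total degree at least 2. Then there exist a formal power series F ∈ K[[x,y]] such that F − (x² + y²) has order at least 3 (i.e. contains only terms of total degree ≥ 3), and a sequence (s_j)_{j≥1} of elements of K, such that F_x·Q − F_y·P = Σ_{j=1}^∞ s_j·(x^{2j+2} + y^{2j+2}) holds in K[[x,y]], where F_x, F_y denote the formal partial derivatives of F. (The s_j are the focal values of the Poincaré differential form P dx + Q dy.) -/

import Mathlib

/-!
Write `F = ∑ₙ Fₙ` in homogeneous parts. Since `p` and `q` have order at least 2, the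
degree-`n` part of `F_x Q - F_y P` is `L Fₙ` plus a term depending only on `F₂, …, Fₙ₋₁`,
where `L = y ∂ₓ - x ∂_y` is the rotation operator. So the `Fₙ` can be chosen one degree at a
time, provided `L` on forms of degree `n` is surjective for odd `n`, and its image together
with `xⁿ + yⁿ` is everything for even `n`. Both follow by solving `L c = d` forwards from the
coefficient of `xⁿ`: on solutions of the homogeneous equations, `cₖ k‼ (n - k)‼` is constant
along each parity class of `k`, which controls the one equation left over.
-/

open MvPolynomial

/-- The formal partial derivative of a formal power series in two variables. -/
noncomputable def psDeriv {K : Type*} [CommSemiring K] (i : Fin 2)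
    (f : MvPowerSeries (Fin 2) K) : MvPowerSeries (Fin 2) K :=
  fun e => ((e i + 1 : ℕ) : K) * MvPowerSeries.coeff (e + Finsupp.single i 1) f

open scoped Nat
open Finsupp (degree single)

lemma MvPowerSeries.coeff_mul_eq_of_coeff_eq {σ R : Type*} [CommSemiring R]
    {f f' g : MvPowerSeries σ R} {e : σ →₀ ℕ} {k : ℕ} (hg : (k : ℕ∞) ≤ g.order)
    (hf : ∀ a, degree a + k ≤ degree e → coeff a f = coeff a f') :
    coeff e (f * g) = coeff e (f' * g) := by
  classical
  refine Finset.sum_congr rfl fun ⟨a, b⟩ hab => ?_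
  replace hab : a + b = e := Finset.HasAntidiagonal.mem_antidiagonal.mp hab
  by_cases hb : degree b < k
  · have hb0 : coeff b g = 0 := coeff_of_lt_order ((Nat.cast_lt.mpr hb).trans_le hg)
    simp only [hb0, mul_zero]
  · rw [hf a (by rw [← hab, map_add]; omega)]

lemma Finsupp.degree_fin_two (e : Fin 2 →₀ ℕ) : degree e = e 0 + e 1 := by
  rw [Finsupp.degree_eq_sum, Fin.sum_univ_two]

lemma Finsupp.fin_two_eq_single_add_single (e : Fin 2 →₀ ℕ) :
    e = single 0 (e 0) + single 1 (e 1) := by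
  ext i
  fin_cases i <;> simp

namespace PoincareForm

variable {K : Type*}

section RotationOp

/-- The operator `y ∂ₓ - x ∂_y` on forms of degree `n`, in coordinates: `c k` is the
coefficient of `x^(n-k) y^k`, and only `k ≤ n` matters. -/
def rotationOp [CommRing K] (n : ℕ) : (ℕ → K) →ₗ[K] (ℕ → K) where
  toFun c k := (if 0 < k then ((n - k + 1 : ℕ) : K) * c (k - 1) else 0) -
    if k < n then ((k + 1 : ℕ) : K) * c (k + 1) else 0
  map_add' c c' := by ext k; simp only [Pi.add_apply]; split_ifs <;> ring
  map_smul' a c := by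
    ext k; simp only [Pi.smul_apply, smul_eq_mul, RingHom.id_apply]; split_ifs <;> ring

lemma rotationOp_apply [CommRing K] (n : ℕ) (c : ℕ → K) (k : ℕ) :
    rotationOp n c k = (if 0 < k then ((n - k + 1 : ℕ) : K) * c (k - 1) else 0) -
      if k < n then ((k + 1 : ℕ) : K) * c (k + 1) else 0 := rfl

lemma rotationOp_apply_self [CommRing K] {n : ℕ} (hn : 0 < n) (c : ℕ → K) :
    rotationOp n c n = c (n - 1) := by
  simp [rotationOp_apply, hn]

def circleLayer [CommRing K] : ℕ → K := fun k => if k = 0 ∨ k = 2 then 1 else 0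

lemma rotationOp_circleLayer [CommRing K] {k : ℕ} (hk : k ≤ 2) :
    rotationOp 2 (circleLayer (K := K)) k = 0 := by
  interval_cases k <;> simp [rotationOp_apply, circleLayer]

lemma mul_doubleFactorial_eq_of_rotationOp_eq_zero [CommRing K] {n : ℕ} {c : ℕ → K}
    (hc : ∀ k, 0 < k → k < n → rotationOp n c k = 0) (k : ℕ) :
    ∀ i, k + 2 * i ≤ n →
      c (k + 2 * i) * (k + 2 * i)‼ * (n - (k + 2 * i))‼ = c k * k‼ * (n - k)‼ := by
  intro i
  induction i with
  | zero => simp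
  | succ i ih =>
    intro hi
    have heq := hc (k + 2 * i + 1) (by omega) (by omega)
    rw [rotationOp_apply, if_pos (by omega), if_pos (by omega),
      show n - (k + 2 * i + 1) + 1 = n - (k + 2 * i) by omega, Nat.add_sub_cancel] at heq
    rw [← ih (by omega), show k + 2 * (i + 1) = k + 2 * i + 2 by ring,
      show n - (k + 2 * i) = n - (k + 2 * i + 2) + 2 by omega, Nat.doubleFactorial_add_two,
      Nat.doubleFactorial_add_two]
    push_cast [show n - (k + 2 * i + 2) + 2 = n - (k + 2 * i) by omega] at heq ⊢
    linear_combination -(↑(k + 2 * i)‼ * ↑(n - (k + 2 * i + 2))‼ : K) * heq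

variable [Field K]

noncomputable def forwardSolve (n : ℕ) (t : K) (d : ℕ → K) : ℕ → K
  | 0 => t
  | 1 => -d 0
  | k + 2 => (((n - k : ℕ) : K) * forwardSolve n t d k - d (k + 1)) / (k + 2 : ℕ)

variable [CharZero K]

lemma rotationOp_forwardSolve {n k : ℕ} (hk : k < n) (t : K) (d : ℕ → K) :
    rotationOp n (forwardSolve n t d) k = d k := by
  rcases k with _ | k
  · simp [rotationOp_apply, hk, forwardSolve]
  · have hstep : forwardSolve n t d (k + 2) =
        (((n - k : ℕ) : K) * forwardSolve n t d k - d (k + 1)) / (k + 2 : ℕ) := rfl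
    rw [rotationOp_apply, if_pos k.succ_pos, if_pos hk, Nat.add_sub_cancel,
      show n - (k + 1) + 1 = n - k by omega, hstep,
      mul_div_cancel₀ _ (Nat.cast_ne_zero.mpr (by omega))]
    ring

lemma exists_rotationOp_eq_of_odd {n : ℕ} (hn : Odd n) (d : ℕ → K) :
    ∃ c : ℕ → K, ∀ k ≤ n, rotationOp n c k = d k := by
  obtain ⟨m, rfl⟩ := hn
  set c₀ := forwardSolve (2 * m + 1) 0 d
  set h := forwardSolve (2 * m + 1) (1 : K) 0
  have hh : h (2 * m) * (2 * m)‼ = (2 * m + 1)‼ := by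
    have := mul_doubleFactorial_eq_of_rotationOp_eq_zero (c := h)
      (fun k _ hk => rotationOp_forwardSolve hk 1 0) 0 m (by omega)
    simpa [h, forwardSolve] using this
  have hh0 : h (2 * m) ≠ 0 :=
    left_ne_zero_of_mul (hh ▸ Nat.cast_ne_zero.mpr (Nat.doubleFactorial_pos _).ne')
  refine ⟨c₀ + ((d (2 * m + 1) - c₀ (2 * m)) / h (2 * m)) • h, fun k hk => ?_⟩
  rw [map_add, map_smul, Pi.add_apply, Pi.smul_apply, smul_eq_mul]
  rcases hk.lt_or_eq with hk | rfl
  · rw [rotationOp_forwardSolve hk, rotationOp_forwardSolve hk, Pi.zero_apply, mul_zero,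
      add_zero]
  · rw [rotationOp_apply_self (by omega), rotationOp_apply_self (by omega), Nat.add_sub_cancel]
    field_simp
    ring

lemma exists_rotationOp_eq_of_even {n : ℕ} (hn : Even n) (hn0 : 0 < n) (d : ℕ → K) :
    ∃ c : ℕ → K, ∃ s : K, ∀ k ≤ n,
      rotationOp n c k = d k + if k = 0 ∨ k = n then s else 0 := by
  obtain ⟨m, rfl⟩ := hn
  obtain ⟨j, rfl⟩ : ∃ j, m = j + 1 := ⟨m - 1, by omega⟩
  set n := j + 1 + (j + 1)
  set c₀ := forwardSolve n 0 d
  set g := forwardSolve n (0 : K) (fun k => if k = 0 then 1 else 0)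
  have hg : g (n - 1) = -1 := by
    have := mul_doubleFactorial_eq_of_rotationOp_eq_zero (c := g)
      (fun k hk0 hk => by rw [rotationOp_forwardSolve hk, if_neg hk0.ne']) 1 j (by omega)
    rw [show 1 + 2 * j = n - 1 by omega, show n - (n - 1) = 1 by omega,
      show n - 1 = 1 + 2 * j by omega] at this
    have hne : ((1 + 2 * j)‼ : K) ≠ 0 := Nat.cast_ne_zero.mpr (Nat.doubleFactorial_pos _).ne'
    refine mul_right_cancel₀ hne ?_
    simpa [g, forwardSolve, show n - 1 = 1 + 2 * j by omega] using this
  refine ⟨c₀ + ((c₀ (n - 1) - d n) / 2) • g, (c₀ (n - 1) - d n) / 2, fun k hk => ?_⟩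
  rw [map_add, map_smul, Pi.add_apply, Pi.smul_apply, smul_eq_mul]
  rcases hk.lt_or_eq with hk | rfl
  · rw [rotationOp_forwardSolve hk, rotationOp_forwardSolve hk]
    by_cases hk0 : k = 0 <;> simp [hk0, hk.ne]
  · rw [rotationOp_apply_self (by omega), rotationOp_apply_self (by omega), hg,
      if_pos (Or.inr rfl)]
    ring

lemma exists_rotationOp_eq {n : ℕ} (hn : 0 < n) (d : ℕ → K) :
    ∃ c : ℕ → K, ∃ s : K, ∀ k ≤ n,
      rotationOp n c k = d k + if Even n ∧ (k = 0 ∨ k = n) then s else 0 := by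
  by_cases he : Even n
  · simpa only [he, true_and] using exists_rotationOp_eq_of_even he hn d
  · obtain ⟨c, hc⟩ := exists_rotationOp_eq_of_odd (Nat.not_even_iff_odd.mp he) d
    exact ⟨c, 0, fun k hk => by simp [hc k hk, he]⟩

end RotationOp

section Layers

lemma coeff_psDeriv [CommSemiring K] (i : Fin 2) (f : MvPowerSeries (Fin 2) K)
    (a : Fin 2 →₀ ℕ) :
    MvPowerSeries.coeff a (psDeriv i f) =
      ((a i + 1 : ℕ) : K) * MvPowerSeries.coeff (a + single i 1) f := rfl

lemma psDeriv_zero [CommSemiring K] (i : Fin 2) :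
    psDeriv i (0 : MvPowerSeries (Fin 2) K) = 0 := by
  ext a
  simp [coeff_psDeriv]

lemma coeff_psDeriv_mul_eq_of_coeff_eq [CommSemiring K] {F F' g : MvPowerSeries (Fin 2) K}
    {e : Fin 2 →₀ ℕ} (hg : 2 ≤ g.order)
    (hF : ∀ a, degree a < degree e → MvPowerSeries.coeff a F = MvPowerSeries.coeff a F')
    (i : Fin 2) :
    MvPowerSeries.coeff e (psDeriv i F * g) = MvPowerSeries.coeff e (psDeriv i F' * g) :=
  MvPowerSeries.coeff_mul_eq_of_coeff_eq (k := 2) hg fun a ha => by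
    rw [coeff_psDeriv, coeff_psDeriv, hF _ (by rw [map_add, Finsupp.degree_single]; omega)]

/-- The series whose homogeneous part of degree `n` is `∑ k ≤ n, c n k x^(n-k) y^k`. -/
noncomputable def ofLayers [Semiring K] (c : ℕ → ℕ → K) : MvPowerSeries (Fin 2) K :=
  fun e => c (degree e) (e 1)

lemma coeff_ofLayers [Semiring K] (c : ℕ → ℕ → K) (e : Fin 2 →₀ ℕ) :
    MvPowerSeries.coeff e (ofLayers c) = c (degree e) (e 1) := rfl

lemma ofLayers_zero [Semiring K] : ofLayers (0 : ℕ → ℕ → K) = 0 := by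
  ext e
  simp [coeff_ofLayers]

lemma coeff_rotation_ofLayers [CommRing K] (c : ℕ → ℕ → K) (e : Fin 2 →₀ ℕ) :
    MvPowerSeries.coeff e (psDeriv 0 (ofLayers c) * MvPowerSeries.X 1 -
      psDeriv 1 (ofLayers c) * MvPowerSeries.X 0) =
      rotationOp (degree e) (c (degree e)) (e 1) := by
  simp only [map_sub, MvPowerSeries.X, MvPowerSeries.coeff_mul_monomial, Finsupp.single_le_iff,
    coeff_psDeriv, coeff_ofLayers, rotationOp_apply, Finsupp.degree_fin_two, mul_one,
    Finsupp.add_apply, Finsupp.tsub_apply, Finsupp.single_eq_same, Finsupp.single_apply]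
  simp only [Fin.isValue, zero_ne_one, one_ne_zero, if_false, tsub_zero, add_zero]
  congr 1 <;> split_ifs <;> first | rfl | omega | (congr 2 <;> omega)

end Layers

section DerivAlong

variable [CommRing K]

noncomputable def derivAlong (p q : MvPolynomial (Fin 2) K) (F : MvPowerSeries (Fin 2) K) :
    MvPowerSeries (Fin 2) K :=
  psDeriv 0 F * ((X 1 + q : MvPolynomial (Fin 2) K) : MvPowerSeries (Fin 2) K) -
    psDeriv 1 F * ((X 0 + p : MvPolynomial (Fin 2) K) : MvPowerSeries (Fin 2) K)

variable (p q : MvPolynomial (Fin 2) K)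

lemma derivAlong_zero : derivAlong p q 0 = 0 := by
  simp [derivAlong, psDeriv_zero]

lemma derivAlong_eq (F : MvPowerSeries (Fin 2) K) :
    derivAlong p q F =
      (psDeriv 0 F * MvPowerSeries.X 1 - psDeriv 1 F * MvPowerSeries.X 0) +
        (psDeriv 0 F * (q : MvPowerSeries (Fin 2) K) -
          psDeriv 1 F * (p : MvPowerSeries (Fin 2) K)) := by
  simp only [derivAlong, MvPolynomial.coe_add, MvPolynomial.coe_X]
  ring

variable {p q}

lemma coeff_derivAlong_ofLayers (hp : 2 ≤ (p : MvPowerSeries (Fin 2) K).order)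
    (hq : 2 ≤ (q : MvPowerSeries (Fin 2) K).order) (c : ℕ → ℕ → K)
    (e : Fin 2 →₀ ℕ) :
    MvPowerSeries.coeff e (derivAlong p q (ofLayers c)) =
      rotationOp (degree e) (c (degree e)) (e 1) +
        MvPowerSeries.coeff e
          (derivAlong p q (ofLayers fun m => if m < degree e then c m else 0)) := by
  rw [derivAlong_eq, derivAlong_eq, map_add, map_add, coeff_rotation_ofLayers,
    coeff_rotation_ofLayers, if_neg (lt_irrefl _), map_zero, Pi.zero_apply, zero_add]
  have hF : ∀ a, degree a < degree e → MvPowerSeries.coeff a (ofLayers c) =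
      MvPowerSeries.coeff a (ofLayers fun m => if m < degree e then c m else 0) :=
    fun a ha => by simp [coeff_ofLayers, ha]
  rw [map_sub, map_sub, coeff_psDeriv_mul_eq_of_coeff_eq hq hF,
    coeff_psDeriv_mul_eq_of_coeff_eq hp hF]

end DerivAlong

lemma two_le_order_coe [CommSemiring K] {p : MvPolynomial (Fin 2) K}
    (hp : ∀ e : Fin 2 →₀ ℕ, e 0 + e 1 < 2 → p.coeff e = 0) :
    2 ≤ (p : MvPowerSeries (Fin 2) K).order :=
  MvPowerSeries.nat_le_order fun e he => by
    rw [MvPolynomial.coeff_coe]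
    exact hp e (by rwa [Finsupp.degree_fin_two] at he)

section Construction

variable [Field K] [CharZero K] (p q : MvPolynomial (Fin 2) K)

/-- Layer `n ≥ 3` cancels the degree-`n` part of `derivAlong` of the lower layers, up to a
multiple of `xⁿ + yⁿ`. -/
noncomputable def focalLayer (n : ℕ) : ℕ → K :=
  if h : 3 ≤ n then
    Classical.choose (exists_rotationOp_eq (K := K) (n := n) (by omega) fun k =>
      -MvPowerSeries.coeff (single 0 (n - k) + single 1 k)
        (derivAlong p q (ofLayers fun m => if hm : m < n then focalLayer m else 0)))
  else if n = 2 then circleLayer else 0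
termination_by n

lemma focalLayer_of_le_one {n : ℕ} (hn : n ≤ 1) : focalLayer p q n = 0 := by
  rw [focalLayer.eq_1, dif_neg (by omega), if_neg (by omega)]

lemma focalLayer_two : focalLayer p q 2 = circleLayer := by
  rw [focalLayer.eq_1, dif_neg (by omega), if_pos rfl]

lemma exists_rotationOp_focalLayer {n : ℕ} (hn : 3 ≤ n) :
    ∃ s : K, ∀ k ≤ n, rotationOp n (focalLayer p q n) k =
      -MvPowerSeries.coeff (single 0 (n - k) + single 1 k)
        (derivAlong p q (ofLayers fun m => if m < n then focalLayer p q m else 0)) +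
      if Even n ∧ (k = 0 ∨ k = n) then s else 0 := by
  rw [focalLayer.eq_1, dif_pos hn]
  simp only [dite_eq_ite]
  exact Classical.choose_spec (exists_rotationOp_eq (K := K) (n := n) (by omega) _)

noncomputable def focalSeries : MvPowerSeries (Fin 2) K := ofLayers (focalLayer p q)

lemma coeff_focalSeries_of_degree_lt_three {e : Fin 2 →₀ ℕ} (he : degree e < 3) :
    MvPowerSeries.coeff e (focalSeries p q) =
      MvPowerSeries.coeff e
        ((X 0 ^ 2 + X 1 ^ 2 : MvPolynomial (Fin 2) K) : MvPowerSeries (Fin 2) K) := by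
  rw [focalSeries, coeff_ofLayers, MvPolynomial.coeff_coe, coeff_add, coeff_X_pow, coeff_X_pow,
    Finsupp.degree_fin_two]
  rw [Finsupp.degree_fin_two] at he
  simp only [Finsupp.ext_iff, Fin.forall_fin_two, Finsupp.single_eq_same, ne_eq, one_ne_zero,
    zero_ne_one, not_false_eq_true, Finsupp.single_eq_of_ne]
  rcases (show e 0 + e 1 ≤ 1 ∨ e 0 + e 1 = 2 by omega) with h | h
  · rw [focalLayer_of_le_one p q h, Pi.zero_apply, if_neg (by omega), if_neg (by omega), add_zero]
  · rw [h, focalLayer_two, circleLayer]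
    split_ifs <;> first | omega | norm_num

variable {p q}

lemma coeff_derivAlong_focalSeries_of_degree_lt_three
    (hp : 2 ≤ (p : MvPowerSeries (Fin 2) K).order)
    (hq : 2 ≤ (q : MvPowerSeries (Fin 2) K).order)
    {e : Fin 2 →₀ ℕ} (he : degree e < 3) :
    MvPowerSeries.coeff e (derivAlong p q (focalSeries p q)) = 0 := by
  have htrunc : (fun m => if m < degree e then focalLayer p q m else 0) = 0 :=
    funext fun m => by
      split_ifs with hm
      · exact focalLayer_of_le_one p q (by omega)
      · rfl
  rw [focalSeries, coeff_derivAlong_ofLayers hp hq, htrunc, ofLayers_zero, derivAlong_zero,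
    map_zero, add_zero]
  rcases (show degree e ≤ 1 ∨ degree e = 2 by omega) with h | h
  · rw [focalLayer_of_le_one p q h, map_zero, Pi.zero_apply]
  · rw [h, focalLayer_two, rotationOp_circleLayer]
    have := Finsupp.le_degree 1 e
    omega

lemma exists_coeff_derivAlong_focalSeries
    (hp : 2 ≤ (p : MvPowerSeries (Fin 2) K).order)
    (hq : 2 ≤ (q : MvPowerSeries (Fin 2) K).order)
    {n : ℕ} (hn : 3 ≤ n) :
    ∃ s : K, ∀ e : Fin 2 →₀ ℕ, degree e = n →
      MvPowerSeries.coeff e (derivAlong p q (focalSeries p q)) =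
        if Even n ∧ (e 1 = 0 ∨ e 1 = n) then s else 0 := by
  obtain ⟨s, hs⟩ := exists_rotationOp_focalLayer p q hn
  refine ⟨s, fun e he => ?_⟩
  have he0 : n - e 1 = e 0 := by rw [← he, Finsupp.degree_fin_two]; omega
  rw [focalSeries, coeff_derivAlong_ofLayers hp hq, he,
    hs _ (he ▸ Finsupp.le_degree 1 e), he0, ← Finsupp.fin_two_eq_single_add_single]
  ring

end Construction

end PoincareForm

open PoincareForm in
theorem exists_focal_values
    (K : Type*) [Field K] [CharZero K]
    (p q : MvPolynomial (Fin 2) K)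
    (hp : ∀ e : Fin 2 →₀ ℕ, e 0 + e 1 < 2 → p.coeff e = 0)
    (hq : ∀ e : Fin 2 →₀ ℕ, e 0 + e 1 < 2 → q.coeff e = 0) :
    ∃ (F : MvPowerSeries (Fin 2) K) (s : ℕ → K),
      (∀ e : Fin 2 →₀ ℕ, e 0 + e 1 < 3 →
        MvPowerSeries.coeff (R := K) e
          (F - ((X 0 : MvPolynomial (Fin 2) K)^2 + (X 1 : MvPolynomial (Fin 2) K)^2
            : MvPolynomial (Fin 2) K)) = 0) ∧
      (∀ j : ℕ, 1 ≤ j →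
        MvPowerSeries.coeff (Finsupp.single 0 (2*j+2))
          (psDeriv 0 F * ((X 1 + q : MvPolynomial (Fin 2) K) : MvPowerSeries (Fin 2) K)
            - psDeriv 1 F * ((X 0 + p : MvPolynomial (Fin 2) K) : MvPowerSeries (Fin 2) K))
          = s j ∧
        MvPowerSeries.coeff (Finsupp.single 1 (2*j+2))
          (psDeriv 0 F * ((X 1 + q : MvPolynomial (Fin 2) K) : MvPowerSeries (Fin 2) K)
            - psDeriv 1 F * ((X 0 + p : MvPolynomial (Fin 2) K) : MvPowerSeries (Fin 2) K))
          = s j) ∧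
      (∀ e : Fin 2 →₀ ℕ,
        (¬ ∃ j : ℕ, 1 ≤ j ∧
            (e = Finsupp.single 0 (2*j+2) ∨ e = Finsupp.single 1 (2*j+2))) →
        MvPowerSeries.coeff e
          (psDeriv 0 F * ((X 1 + q : MvPolynomial (Fin 2) K) : MvPowerSeries (Fin 2) K)
            - psDeriv 1 F * ((X 0 + p : MvPolynomial (Fin 2) K) : MvPowerSeries (Fin 2) K))
          = 0) := by
  have hp' := two_le_order_coe hp
  have hq' := two_le_order_coe hq
  refine ⟨focalSeries p q,
    fun j => MvPowerSeries.coeff (single 0 (2 * j + 2)) (derivAlong p q (focalSeries p q)),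
    fun e he => ?_, fun j hj => ?_, fun e he => ?_⟩
  · rw [map_sub, sub_eq_zero, coeff_focalSeries_of_degree_lt_three p q
      (by rwa [Finsupp.degree_fin_two])]
  · obtain ⟨s, hs⟩ := exists_coeff_derivAlong_focalSeries hp' hq' (n := 2 * j + 2) (by omega)
    refine ⟨rfl, ?_⟩
    change MvPowerSeries.coeff _ (derivAlong p q (focalSeries p q)) = MvPowerSeries.coeff _ _
    rw [hs _ (Finsupp.degree_single _ _), hs _ (Finsupp.degree_single _ _)]
    simp
  · change MvPowerSeries.coeff e (derivAlong p q (focalSeries p q)) = 0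
    by_cases hlow : degree e < 3
    · exact coeff_derivAlong_focalSeries_of_degree_lt_three hp' hq' hlow
    obtain ⟨s, hs⟩ := exists_coeff_derivAlong_focalSeries hp' hq' (le_of_not_gt hlow)
    rw [hs e rfl, if_neg]
    rintro ⟨⟨m, hm⟩, he1⟩
    refine he ⟨m - 1, by omega, ?_⟩
    rw [Finsupp.degree_fin_two] at hm hlow he1
    rcases he1 with he1 | he1 <;> [left; right] <;> ext i <;> fin_cases i <;> simp <;> omega
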